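/- arXiv:math/0702051 — 2 statements merged into one kernel-verified Lean document; each statement's English description precedes it below -/
import Mathlib

section
/- Let M be a compact polynomially convex subset of C^N and let E be a finite or countably infinite subset of C^N \ M such that M ∪ E is compact. Then M ∪ E is polynomially convex. -/
/-!
Fix `z ∉ M ∪ E` and call `z` separated from a set `S` if some polynomial equals `1` at `z` and
has modulus `< 1` on `S`. Being separated from a compact set is an open condition, so a
minimal compact `S` with `M ⊆ S ⊆ M ∪ E` from which `z` is not separated exists by Zorn's lemma.
Separation from `M ∪ S'`, `S'` the derived set of `S`, passes to `S`: if `|h| < 1` on `M ∪ S'`,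
then `|h|` is close to `1` only at finitely many points of `S`, and `h ^ n g` separates `z` from
`S` when `g` kills those points and `n` is large. Hence `S = M ∪ S'` by minimality, i.e. no point
of the countable set `S \ M` is isolated in `S`; near such a point this would produce a
nonempty countable perfect set, which does not exist. So `S = M`, contradicting the polynomial
convexity of `M`.
-/

/-- A compact set `K ⊆ ℂ^N` is polynomially convex if every point outside `K`
can be separated from `K` by a polynomial. -/
def PolyConvex (N : ℕ) (K : Set (Fin N → ℂ)) : Prop :=
  ∀ z : Fin N → ℂ, z ∉ K → ∃ p : MvPolynomial (Fin N) ℂ,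
    ∀ w ∈ K, ‖MvPolynomial.eval w p‖ < ‖MvPolynomial.eval z p‖

open MvPolynomial Set Filter Topology

theorem Perfect.not_countable {X : Type*} [MetricSpace X] [CompleteSpace X] {C : Set X}
    (hC : Perfect C) (hne : C.Nonempty) : ¬ C.Countable := by
  intro hcount
  obtain ⟨f, hfC, -, hf⟩ := hC.exists_nat_bool_injection hne
  have : (univ : Set (ℕ → Bool)).Countable := by
    simpa using (hcount.mono hfC).preimage hf
  rw [countable_univ_iff, ← Cardinal.mk_le_aleph0_iff] at this
  simpa using this.trans_lt (Cardinal.cantor Cardinal.aleph0)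

theorem IsClosed.subset_of_diff_subset_derivedSet {X : Type*} [MetricSpace X] [CompleteSpace X]
    {S M : Set X} (hS : IsClosed S) (hM : IsClosed M) (hcount : (S \ M).Countable)
    (hacc : S \ M ⊆ derivedSet S) : S ⊆ M := by
  intro x hxS
  by_contra hxM
  obtain ⟨ε, hε, hball⟩ := Metric.isOpen_iff.mp hM.isOpen_compl x hxM
  have hpre : Preperfect (Metric.ball x (ε / 2) ∩ S) := fun y hy =>
    (hacc ⟨hy.2, hball (Metric.ball_subset_ball (by linarith) hy.1)⟩).nhds_inter
      (Metric.isOpen_ball.mem_nhds hy.1)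
  have hsub : closure (Metric.ball x (ε / 2) ∩ S) ⊆ S \ M := by
    refine (closure_inter_subset_inter_closure _ _).trans fun y hy => ⟨hS.closure_subset hy.2, ?_⟩
    exact hball <| Metric.closedBall_subset_ball (by linarith)
      (Metric.closure_ball_subset_closedBall hy.1)
  exact hpre.perfect_closure.not_countable
    ⟨x, subset_closure ⟨Metric.mem_ball_self (by linarith), hxS⟩⟩ (hcount.mono hsub)

theorem IsCompact.finite_of_disjoint_derivedSet {X : Type*} [TopologicalSpace X] {F S : Set X}
    (hF : IsCompact F) (hFS : F ⊆ S) (hdisj : Disjoint F (derivedSet S)) : F.Finite := by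
  by_contra hinf
  obtain ⟨x, hxF, hacc⟩ := Set.Infinite.exists_accPt_of_subset_isCompact hinf hF subset_rfl
  exact hdisj.notMem_of_mem_left hxF (derivedSet_mono F S hFS hacc)

theorem IsCompact.exists_forall_le_of_forall_lt {X α : Type*} [TopologicalSpace X] [LinearOrder α]
    [TopologicalSpace α] [ClosedIciTopology α] [NoMinOrder α] {S : Set X} (hS : IsCompact S)
    {f : X → α} (hf : ContinuousOn f S) {a : α} (hlt : ∀ x ∈ S, f x < a) :
    ∃ c < a, ∀ x ∈ S, f x ≤ c := by
  rcases S.eq_empty_or_nonempty with rfl | hne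
  · obtain ⟨c, hc⟩ := exists_lt a
    exact ⟨c, hc, by simp⟩
  · obtain ⟨x, hx, hmax⟩ := hS.exists_isMaxOn hne hf
    exact ⟨f x, hlt x hx, fun y hy => hmax hy⟩

section Interpolation

variable {K σ : Type*} [Field K]

theorem MvPolynomial.exists_eval_eq_one_and_eval_eq_zero {z w : σ → K} (hzw : w ≠ z) :
    ∃ ℓ : MvPolynomial σ K, eval z ℓ = 1 ∧ eval w ℓ = 0 := by
  obtain ⟨i, hi⟩ := Function.ne_iff.mp hzw
  refine ⟨C (z i - w i)⁻¹ * (X i - C (w i)), ?_, by simp⟩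
  simp [inv_mul_cancel₀ (sub_ne_zero.mpr hi.symm)]

theorem MvPolynomial.exists_eval_eq_one_and_eqOn_zero {z : σ → K} {F : Set (σ → K)}
    (hF : F.Finite) (hzF : z ∉ F) :
    ∃ g : MvPolynomial σ K, eval z g = 1 ∧ ∀ w ∈ F, eval w g = 0 := by
  choose ℓ hℓz hℓw using fun w (hw : w ∈ F) =>
    exists_eval_eq_one_and_eval_eq_zero (ne_of_mem_of_not_mem hw hzF)
  refine ⟨∏ w : hF.toFinset, ℓ w (hF.mem_toFinset.mp w.2), ?_, fun w hw => ?_⟩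
  · simp [map_prod, hℓz]
  · rw [map_prod]
    exact Finset.prod_eq_zero (i := ⟨w, hF.mem_toFinset.mpr hw⟩) (Finset.mem_univ _) (hℓw w _)

end Interpolation

section Separation

variable {𝕜 σ : Type*} [NormedField 𝕜]

def PolySeparated (z : σ → 𝕜) (S : Set (σ → 𝕜)) : Prop :=
  ∃ p : MvPolynomial σ 𝕜, eval z p = 1 ∧ ∀ w ∈ S, ‖eval w p‖ < 1

theorem polySeparated_iff_exists_norm_lt {z : σ → 𝕜} {S : Set (σ → 𝕜)} :
    PolySeparated z S ↔ ∃ p : MvPolynomial σ 𝕜, ∀ w ∈ S, ‖eval w p‖ < ‖eval z p‖ := by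
  constructor
  · rintro ⟨p, hpz, hp⟩
    exact ⟨p, by simpa [hpz] using hp⟩
  · rintro ⟨p, hp⟩
    rcases eq_or_ne (eval z p) 0 with h0 | h0
    · exact ⟨1, by simp, fun w hw => absurd (hp w hw) (by simp [h0])⟩
    · refine ⟨C (eval z p)⁻¹ * p, by simp [h0], fun w hw => ?_⟩
      rw [eval_mul, eval_C, norm_mul, norm_inv]
      exact (inv_mul_lt_one₀ (norm_pos_iff.mpr h0)).mpr (hp w hw)

theorem continuous_norm_eval (p : MvPolynomial σ 𝕜) : Continuous fun w : σ → 𝕜 => ‖eval w p‖ :=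
  continuous_norm.comp (continuous_eval p)

theorem exists_norm_eval_pow_mul_lt_one {S F : Set (σ → 𝕜)} (hS : IsCompact S)
    {h g : MvPolynomial σ 𝕜} {c : ℝ} (hc₀ : 0 ≤ c) (hc₁ : c < 1)
    (hh : ∀ w ∈ S \ F, ‖eval w h‖ ≤ c) (hg : ∀ w ∈ F, eval w g = 0) :
    ∃ n : ℕ, ∀ w ∈ S, ‖eval w (h ^ n * g)‖ < 1 := by
  obtain ⟨G, hG⟩ := hS.exists_bound_of_continuousOn (continuous_eval g).continuousOn
  have hsmall : Tendsto (fun n : ℕ => c ^ n * G) atTop (𝓝 0) := by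
    simpa using (tendsto_pow_atTop_nhds_zero_of_lt_one hc₀ hc₁).mul_const G
  obtain ⟨n, hn⟩ := (hsmall.eventually (gt_mem_nhds zero_lt_one)).exists
  refine ⟨n, fun w hw => ?_⟩
  by_cases hwF : w ∈ F
  · simp [hg w hwF]
  · calc ‖eval w (h ^ n * g)‖ = ‖eval w h‖ ^ n * ‖eval w g‖ := by simp
      _ ≤ c ^ n * G := by gcongr; exacts [hh w ⟨hw, hwF⟩, hG w hw]
      _ < 1 := hn

theorem PolySeparated.union_of_derivedSet_subset {z : σ → 𝕜} {A S : Set (σ → 𝕜)}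
    (hsep : PolySeparated z A) (hA : IsCompact A) (hS : IsCompact S) (hzS : z ∉ S)
    (hSA : derivedSet S ⊆ A) : PolySeparated z (A ∪ S) := by
  obtain ⟨h, hz, hlt⟩ := hsep
  obtain ⟨c₁, hc₁, hle⟩ :=
    hA.exists_forall_le_of_forall_lt (continuous_norm_eval h).continuousOn hlt
  obtain ⟨c, hc₁c, hc⟩ := exists_between (max_lt hc₁ one_pos)
  obtain ⟨hc₁c, hc₀⟩ := max_lt_iff.mp hc₁c
  set F := S ∩ {w | c ≤ ‖eval w h‖}
  have hFA : Disjoint F (derivedSet S) := by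
    refine disjoint_left.mpr fun w hwF hwS => ?_
    exact (hle w (hSA hwS)).not_gt (hc₁c.trans_le hwF.2)
  have hF : F.Finite := (hS.inter_right (isClosed_le continuous_const
    (continuous_norm_eval h))).finite_of_disjoint_derivedSet inter_subset_left hFA
  obtain ⟨g, hgz, hgF⟩ := exists_eval_eq_one_and_eqOn_zero hF fun hzF => hzS hzF.1
  have hhF : ∀ w ∈ (A ∪ S) \ F, ‖eval w h‖ ≤ c := by
    rintro w ⟨hwA | hwS, hwF⟩
    · exact (hle w hwA).trans hc₁c.le
    · exact (not_le.mp fun hcw => hwF ⟨hwS, hcw⟩).le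
  obtain ⟨n, hn⟩ := exists_norm_eval_pow_mul_lt_one (hA.union hS) hc₀.le hc hhF hgF
  exact ⟨h ^ n * g, by simp [hz, hgz], hn⟩

theorem PolySeparated.exists_of_iInter {z : σ → 𝕜} {ι : Type*} [Nonempty ι] {V : ι → Set (σ → 𝕜)}
    (hsep : PolySeparated z (⋂ i, V i)) (hV : Directed (· ⊇ ·) V) (hVc : ∀ i, IsCompact (V i)) :
    ∃ i, PolySeparated z (V i) := by
  obtain ⟨p, hpz, hp⟩ := hsep
  obtain ⟨i, hi⟩ := exists_subset_nhds_of_isCompact hV hVc (U := {w | ‖eval w p‖ < 1})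
    fun w hw => (isOpen_lt (continuous_norm_eval p) continuous_const).mem_nhds (hp w hw)
  exact ⟨i, p, hpz, hi⟩

theorem PolySeparated.of_countable_diff [Fintype σ] [CompleteSpace 𝕜] {z : σ → 𝕜}
    {M K : Set (σ → 𝕜)} (hsep : PolySeparated z M) (hM : IsClosed M) (hK : IsCompact K)
    (hMK : M ⊆ K) (hKM : (K \ M).Countable) (hzK : z ∉ K) : PolySeparated z K := by
  by_contra hKsep
  set B := {S | IsCompact S ∧ M ⊆ S ∧ S ⊆ K ∧ ¬ PolySeparated z S}
  have hchain : ∀ c ⊆ B, IsChain (· ⊆ ·) c → c.Nonempty → ∃ lb ∈ B, ∀ S ∈ c, lb ⊆ S := by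
    rintro c hcB hc ⟨S₀, hS₀⟩
    have : Nonempty c := ⟨⟨S₀, hS₀⟩⟩
    refine ⟨⋂₀ c, ⟨?_, ?_, ?_, fun hsep => ?_⟩, fun S hS => sInter_subset_of_mem hS⟩
    · exact (hcB hS₀).1.of_isClosed_subset (isClosed_sInter fun S hS => (hcB hS).1.isClosed)
        (sInter_subset_of_mem hS₀)
    · exact subset_sInter fun S hS => (hcB hS).2.1
    · exact (sInter_subset_of_mem hS₀).trans (hcB hS₀).2.2.1
    · rw [sInter_eq_iInter] at hsep
      have hdir : Directed (· ⊇ ·) (Subtype.val : c → Set (σ → 𝕜)) := fun S T =>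
        (hc.total S.2 T.2).elim (fun h => ⟨S, subset_rfl, h⟩) fun h => ⟨T, h, subset_rfl⟩
      obtain ⟨⟨S, hS⟩, hSsep⟩ := hsep.exists_of_iInter hdir fun S => (hcB S.2).1
      exact (hcB hS).2.2.2 hSsep
  obtain ⟨m, -, ⟨hmc, hMm, hmK, hmsep⟩, hmin⟩ :=
    zorn_superset_nonempty B hchain K ⟨hK, hMK, subset_rfl, hKsep⟩
  have hm'm : M ∪ derivedSet m ⊆ m :=
    union_subset hMm ((isClosed_iff_derivedSet_subset m).mp hmc.isClosed)
  have hm'c : IsCompact (M ∪ derivedSet m) :=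
    hmc.of_isClosed_subset (hM.union (isClosed_derivedSet m)) hm'm
  have hm'sep : ¬ PolySeparated z (M ∪ derivedSet m) := fun h => hmsep <| by
    simpa [union_eq_right.mpr hm'm] using
      h.union_of_derivedSet_subset hm'c hmc (fun hz => hzK (hmK hz)) subset_union_right
  have hmm' : m ⊆ M ∪ derivedSet m := hmin ⟨hm'c, subset_union_left, hm'm.trans hmK, hm'sep⟩ hm'm
  have hmM : m ⊆ M := hmc.isClosed.subset_of_diff_subset_derivedSet hM
    (hKM.mono (sdiff_subset_sdiff_left hmK)) fun w hw => (hmm' hw.1).resolve_left hw.2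
  exact hmsep (hmM.antisymm hMm ▸ hsep)

end Separation

theorem stmt_0_general (N : ℕ) (M E : Set (Fin N → ℂ))
    (hM : IsCompact M) (hMpc : PolyConvex N M)
    (hE : E.Countable)
    (hME : IsCompact (M ∪ E)) :
    PolyConvex N (M ∪ E) := by
  intro z hz
  have hsep : PolySeparated z M :=
    polySeparated_iff_exists_norm_lt.mpr (hMpc z fun hzM => hz (Or.inl hzM))
  refine polySeparated_iff_exists_norm_lt.mp
    (hsep.of_countable_diff hM.isClosed hME subset_union_left ?_ hz)
  rw [union_sdiff_left]
  exact hE.mono sdiff_subset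

theorem stmt_0 (N : ℕ) (M E : Set (Fin N → ℂ))
    (hM : IsCompact M) (hMpc : PolyConvex N M)
    (hE : E.Countable) (hEM : E ⊆ Mᶜ)
    (hME : IsCompact (M ∪ E)) :
    PolyConvex N (M ∪ E) :=
  stmt_0_general N M E hM hMpc hE hME
end

section
/- Let a_1, …, a_l and b_1, …, b_l be two lists of distinct points in C^2 (the a_i pairwise distinct and the b_i pairwise distinct). Then there exists a holomorphic automorphism Φ of C^2, given as a finite composition of shears (z,w) ↦ (z, w + f(z)) and (z,w) ↦ (z + g(w), w) with f, g polynomials, such that Φ(a_i) = b_i for i = 1, …, l. -/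
/-!
First move the points by the linear shear `(z, w) ↦ (z + c w, w)` for a generic `c`, which makes
their first coordinates pairwise distinct; do the same with the target points. Between two
configurations with distinct first coordinates `(xᵢ, uᵢ)` and `(yᵢ, vᵢ)` three polynomial shears,
obtained by Lagrange interpolation, suffice:
`(xᵢ, uᵢ) ↦ (xᵢ, xᵢ) ↦ (yᵢ, xᵢ) ↦ (yᵢ, vᵢ)`.
-/

/-- A polynomial shear of `ℂ²` in one of the two coordinate directions. -/
def IsPolyShear (s : ℂ × ℂ → ℂ × ℂ) : Prop :=
  (∃ f : Polynomial ℂ, s = fun p => (p.1, p.2 + f.eval p.1)) ∨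
  (∃ g : Polynomial ℂ, s = fun p => (p.1 + g.eval p.2, p.2))

open Polynomial Function

theorem exists_polynomial_eval_eq {F ι : Type*} [Field F] [Finite ι] {x : ι → F}
    (hx : Injective x) (y : ι → F) : ∃ p : F[X], ∀ i, p.eval (x i) = y i := by
  classical
  have := Fintype.ofFinite ι
  exact ⟨Lagrange.interpolate Finset.univ x y,
    fun i => Lagrange.eval_interpolate_at_node y hx.injOn (Finset.mem_univ i)⟩

/-- A generic `c` works since only finitely many values `(zᵢ - zⱼ) / (wⱼ - wᵢ)` are excluded. -/
theorem exists_injective_fst_add_mul_snd {K ι : Type*} [Field K] [Infinite K] [Finite ι]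
    {a : ι → K × K} (ha : Injective a) :
    ∃ c : K, Injective fun i => (a i).1 + c * (a i).2 := by
  obtain ⟨c, hc⟩ := (Set.finite_range fun p : ι × ι =>
      ((a p.1).1 - (a p.2).1) / ((a p.2).2 - (a p.1).2)).infinite_compl.nonempty
  refine ⟨c, fun i j hij => ha ?_⟩
  dsimp only at hij
  by_cases hsnd : (a i).2 = (a j).2
  · rw [hsnd, add_left_inj] at hij
    exact Prod.ext hij hsnd
  · refine absurd ⟨(i, j), ?_⟩ hc
    rw [div_eq_iff (sub_ne_zero.2 (Ne.symm hsnd))]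
    linear_combination hij

def IsPolyShearComposition (Φ : ℂ × ℂ → ℂ × ℂ) : Prop :=
  ∃ L : List (ℂ × ℂ → ℂ × ℂ), (∀ s ∈ L, IsPolyShear s) ∧ L.foldr (· ∘ ·) id = Φ

namespace IsPolyShearComposition

theorem comp {Φ Ψ : ℂ × ℂ → ℂ × ℂ} (hΦ : IsPolyShearComposition Φ)
    (hΨ : IsPolyShearComposition Ψ) : IsPolyShearComposition (Φ ∘ Ψ) := by
  obtain ⟨L, hL, rfl⟩ := hΦ
  obtain ⟨M, hM, rfl⟩ := hΨ
  refine ⟨L ++ M, List.forall_mem_append.2 ⟨hL, hM⟩, ?_⟩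
  induction L with
  | nil => rfl
  | cons s L ih => simp only [List.cons_append, List.foldr_cons, ih fun t ht => hL t (.tail s ht),
      comp_assoc]

theorem of_isPolyShear {s : ℂ × ℂ → ℂ × ℂ} (hs : IsPolyShear s) : IsPolyShearComposition s :=
  ⟨[s], List.forall_mem_singleton.2 hs, rfl⟩

theorem vertical (f : ℂ[X]) : IsPolyShearComposition fun p => (p.1, p.2 + f.eval p.1) :=
  of_isPolyShear (Or.inl ⟨f, rfl⟩)

theorem horizontal (g : ℂ[X]) : IsPolyShearComposition fun p => (p.1 + g.eval p.2, p.2) :=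
  of_isPolyShear (Or.inr ⟨g, rfl⟩)

theorem linear_horizontal (c : ℂ) : IsPolyShearComposition fun p => (p.1 + c * p.2, p.2) := by
  convert horizontal (C c * X) using 4
  simp

end IsPolyShearComposition

open IsPolyShearComposition

theorem exists_isPolyShearComposition_of_injective_fst {ι : Type*} [Finite ι]
    {a b : ι → ℂ × ℂ} (ha : Injective fun i => (a i).1) (hb : Injective fun i => (b i).1) :
    ∃ Φ, IsPolyShearComposition Φ ∧ ∀ i, Φ (a i) = b i := by
  obtain ⟨f₁, hf₁⟩ := exists_polynomial_eval_eq ha fun i => (a i).1 - (a i).2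
  obtain ⟨g, hg⟩ := exists_polynomial_eval_eq ha fun i => (b i).1 - (a i).1
  obtain ⟨f₂, hf₂⟩ := exists_polynomial_eval_eq hb fun i => (b i).2 - (a i).1
  refine ⟨_, ((vertical f₂).comp (horizontal g)).comp (vertical f₁), fun i => ?_⟩
  simp only [comp_apply, hf₁, add_sub_cancel, hg, hf₂]

theorem exists_isPolyShearComposition_of_injective {ι : Type*} [Finite ι] {a b : ι → ℂ × ℂ}
    (ha : Injective a) (hb : Injective b) :
    ∃ Φ, IsPolyShearComposition Φ ∧ ∀ i, Φ (a i) = b i := by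
  obtain ⟨c, hc⟩ := exists_injective_fst_add_mul_snd ha
  obtain ⟨d, hd⟩ := exists_injective_fst_add_mul_snd hb
  obtain ⟨Φ, hΦ, hΦab⟩ := exists_isPolyShearComposition_of_injective_fst
    (a := fun i => ((a i).1 + c * (a i).2, (a i).2))
    (b := fun i => ((b i).1 + d * (b i).2, (b i).2)) hc hd
  refine ⟨_, ((linear_horizontal (-d)).comp hΦ).comp (linear_horizontal c), fun i => ?_⟩
  simp only [comp_apply, hΦab]
  ring_nf

theorem stmt_11 (l : ℕ) (a b : Fin l → ℂ × ℂ)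
    (ha : Function.Injective a) (hb : Function.Injective b) :
    ∃ (L : List ((ℂ × ℂ) → (ℂ × ℂ))),
      (∀ s ∈ L, IsPolyShear s) ∧
      ∀ i, (L.foldr (· ∘ ·) id) (a i) = b i := by
  obtain ⟨Φ, ⟨L, hL, rfl⟩, hΦab⟩ := exists_isPolyShearComposition_of_injective ha hb
  exact ⟨L, hL, hΦab⟩
end
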